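/- In any ℚ(v)-algebra, suppose K is invertible and E, F satisfy EF − FE = (K−K^{−1})/(v−v^{−1}) with KE = v²EK and KF = v^{−2}FK. Then for all a, b ≥ 1: E^{(a)}F^{(b)} = Σ_{t=0}^{min(a,b)} F^{(b−t)} · [K; 2t−a−b choose t] · E^{(a−t)}, where E^{(m)} = E^m/[m]!, F^{(m)} = F^m/[m]!, and [K; c choose t] = Π_{s=1}^{t} (K v^{c−s+1} − K^{−1} v^{−c+s−1})/(v^s − v^{−s}). -/

import Mathlib

/-!
Induct on `a`. Multiplying the expansion of `E^{(a)} F^{(b)}` on the left by `E`, each term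
`F^{(b-t)} [K; c choose t] E^{(a-t)}` splits, via `E F^{(m)} = F^{(m)} E + F^{(m-1)} [K; 1-m]` and
`E [K; c] = [K; c-2] E`, into a term of the same shape and one with `t` raised by one. The two
contributions with the same `t` recombine into `[a+1]` times the new term by the q-Pascal identity
`[n] v^x = [n-t] v^(x-t) + [t] v^(x+n-t)`. Extending divided powers by zero to negative exponents
removes every boundary case, so the sum may run over all `t ≤ a`.
-/

noncomputable def v : RatFunc ℚ := RatFunc.X

/-- The quantum integer `[m] = (v^m - v^{-m})/(v - v^{-1})`. -/
noncomputable def qint (m : ℤ) : RatFunc ℚ := (v ^ m - v ^ (-m)) / (v - v⁻¹)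

/-- The quantum factorial `[m]! = [m][m-1]⋯[1]`. -/
noncomputable def qfact (m : ℕ) : RatFunc ℚ :=
  ∏ s ∈ Finset.range m, qint ((s : ℤ) + 1)

open Finset

lemma v_ne_zero : v ≠ 0 := RatFunc.X_ne_zero

lemma v_pow_ne_one {n : ℕ} (hn : n ≠ 0) : v ^ n ≠ 1 := by
  intro h
  have := congrArg RatFunc.intDegree h
  rw [v, ← RatFunc.algebraMap_X, ← map_pow, RatFunc.intDegree_polynomial,
    Polynomial.natDegree_X_pow, RatFunc.intDegree_one] at this
  omega

lemma zpow_sub_zpow_neg_ne_zero {m : ℤ} (hm : 0 < m) : v ^ m - v ^ (-m) ≠ 0 := by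
  lift m to ℕ using hm.le
  rw [sub_ne_zero, zpow_neg, zpow_natCast]
  intro h
  apply v_pow_ne_one (n := 2 * m) (by omega)
  rw [two_mul, pow_add]
  nth_rw 2 [h]
  exact mul_inv_cancel₀ (pow_ne_zero _ v_ne_zero)

lemma v_sub_inv_ne_zero : v - v⁻¹ ≠ 0 := by simpa using zpow_sub_zpow_neg_ne_zero one_pos

lemma qint_ne_zero {m : ℤ} (hm : 0 < m) : qint m ≠ 0 :=
  div_ne_zero (zpow_sub_zpow_neg_ne_zero hm) v_sub_inv_ne_zero

@[simp] lemma qint_zero : qint 0 = 0 := by simp [qint]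

lemma qint_one : qint 1 = 1 := by simp [qint, div_self v_sub_inv_ne_zero]

lemma qfact_succ (n : ℕ) : qfact (n + 1) = qfact n * qint (n + 1) := prod_range_succ _ n

lemma qint_mul_zpow (n t x : ℤ) :
    qint n * v ^ x = qint (n - t) * v ^ (x - t) + qint t * v ^ (x + n - t) := by
  simp only [qint, div_mul_eq_mul_div, ← add_div, sub_mul, ← zpow_add₀ v_ne_zero]
  ring_nf

lemma sum_range_eq_of_pascal {M : Type*} [AddCommMonoid M] {g P Q : ℕ → M} (n : ℕ)
    (h0 : g 0 = P 0) (hsucc : ∀ t, g (t + 1) = P (t + 1) + Q t) (hlast : P (n + 1) = 0) :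
    ∑ t ∈ range (n + 1 + 1), g t = ∑ t ∈ range (n + 1), (P t + Q t) := by
  rw [sum_range_succ', h0, sum_congr rfl fun t _ => hsucc t, sum_add_distrib, sum_add_distrib,
    add_right_comm, ← sum_range_succ' P, sum_range_succ, hlast, add_zero]

section Sl2

variable {A : Type*} [Ring A] [Algebra (RatFunc ℚ) A]

/-- `[K; c]`, with `Ki` standing for `K⁻¹`. -/
noncomputable def kBracket (K Ki : A) (c : ℤ) : A :=
  (v - v⁻¹)⁻¹ • (v ^ c • K - v ^ (-c) • Ki)

/-- `[K; c choose t]`. -/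
noncomputable def kBinom (K Ki : A) (c : ℤ) (t : ℕ) : A :=
  ((List.range t).map fun s : ℕ => (v ^ ((s : ℤ) + 1) - v ^ (-(s : ℤ) - 1))⁻¹ •
    (v ^ (c - s) • K - v ^ (-(c - s)) • Ki)).prod

/-- The divided power `X^{(m)}`, extended by zero to `m < 0` so that the recursions below hold
for every `m : ℤ`. -/
noncomputable def dpow (X : A) (m : ℤ) : A :=
  if m < 0 then 0 else (qfact m.toNat)⁻¹ • X ^ m.toNat

variable {E F K Ki : A}

lemma qint_smul_kBracket (n t x : ℤ) : qint n • kBracket K Ki x =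
    qint (n - t) • kBracket K Ki (x - t) + qint t • kBracket K Ki (x + n - t) := by
  simp only [kBracket, smul_sub, smul_smul]
  rw [sub_add_sub_comm, ← add_smul, ← add_smul]
  congr 2
  · linear_combination (v - v⁻¹)⁻¹ * qint_mul_zpow n t x
  · have h := qint_mul_zpow n (n - t) (-x)
    rw [sub_sub_cancel, show -x - (n - t) = -(x + n - t) by ring,
      show -x + n - (n - t) = -(x - t) by ring] at h
    linear_combination (v - v⁻¹)⁻¹ * h

lemma commute_kBracket (h : Commute K Ki) (x y : ℤ) :
    Commute (kBracket K Ki x) (kBracket K Ki y) := by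
  unfold kBracket
  refine .smul_left (.smul_right (.sub_left (.sub_right ?_ ?_) (.sub_right ?_ ?_)) _) _ <;>
    refine .smul_left (.smul_right ?_ _) _
  exacts [.refl K, h, h.symm, .refl Ki]

lemma kBinom_zero (c : ℤ) : kBinom K Ki c 0 = 1 := rfl

lemma kBinom_succ (c : ℤ) (t : ℕ) :
    kBinom K Ki c (t + 1) = (qint (t + 1))⁻¹ • (kBinom K Ki c t * kBracket K Ki (c - t)) := by
  rw [kBinom, List.prod_range_succ, ← kBinom, kBracket, mul_smul_comm, mul_smul_comm, smul_smul,
    qint, inv_div, div_mul_eq_mul_div, mul_inv_cancel₀ v_sub_inv_ne_zero, one_div, neg_add']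

lemma kBinom_succ' (c : ℤ) (t : ℕ) :
    kBinom K Ki (c + 1) (t + 1) =
      (qint (t + 1))⁻¹ • (kBracket K Ki (c + 1) * kBinom K Ki c t) := by
  induction t with
  | zero => simp [kBinom_succ, kBinom_zero]
  | succ t ih =>
    rw [kBinom_succ, ih, kBinom_succ, smul_mul_assoc, mul_smul_comm, mul_assoc]
    push_cast
    ring_nf

lemma commute_kBracket_kBinom (h : Commute K Ki) (x c : ℤ) (t : ℕ) :
    Commute (kBracket K Ki x) (kBinom K Ki c t) := by
  induction t with
  | zero => exact .one_right _
  | succ t ih => rw [kBinom_succ]; exact (ih.mul_right (commute_kBracket h _ _)).smul_right _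

-- Peeling `[K; c+1]` off the front of the left side and `[K; c-u]` off the back of the first
-- term on the right leaves the q-Pascal identity `qint_smul_kBracket`.
lemma qint_smul_kBinom (h : Commute K Ki) (n c : ℤ) (u : ℕ) :
    qint n • kBinom K Ki (c + 1) (u + 1) = qint (n - (u + 1)) • kBinom K Ki c (u + 1)
      + kBracket K Ki (n + c - u) * kBinom K Ki c u := by
  have hu : qint (u + 1) ≠ 0 := qint_ne_zero (by positivity)
  rw [kBinom_succ', kBinom_succ, ← (commute_kBracket_kBinom h _ _ _).eq, smul_comm (qint n),
    ← smul_mul_assoc (qint n), qint_smul_kBracket n (u + 1) (c + 1), add_mul, smul_add,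
    smul_mul_assoc, smul_mul_assoc, inv_smul_smul₀ hu, smul_comm (qint (u + 1))⁻¹,
    show c + 1 - (u + 1) = c - u by ring, show c + 1 + n - (u + 1) = n + c - u by ring]

lemma mul_kBracket {X : A} {m : ℤ} (hK : K * Ki = 1) (hK' : Ki * K = 1)
    (hKX : K * X = v ^ m • (X * K)) (x : ℤ) :
    X * kBracket K Ki x = kBracket K Ki (x - m) * X := by
  have hXK : X * K = v ^ (-m) • (K * X) := by
    rw [hKX, smul_smul, ← zpow_add₀ v_ne_zero, neg_add_cancel, zpow_zero, one_smul]
  have hXKi : X * Ki = v ^ m • (Ki * X) := by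
    calc X * Ki = Ki * (K * X) * Ki := by rw [← mul_assoc, hK', one_mul]
      _ = v ^ m • (Ki * X * (K * Ki)) := by
        rw [hKX]; simp only [mul_smul_comm, smul_mul_assoc, mul_assoc]
      _ = v ^ m • (Ki * X) := by rw [hK, mul_one]
  simp only [kBracket, mul_smul_comm, smul_mul_assoc, mul_sub, sub_mul, hXK, hXKi, smul_smul,
    ← zpow_add₀ v_ne_zero]
  ring_nf

lemma mul_kBinom {X : A} {m : ℤ} (hK : K * Ki = 1) (hK' : Ki * K = 1)
    (hKX : K * X = v ^ m • (X * K)) (c : ℤ) (t : ℕ) :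
    X * kBinom K Ki c t = kBinom K Ki (c - m) t * X := by
  induction t with
  | zero => simp [kBinom_zero]
  | succ t ih =>
    rw [kBinom_succ, kBinom_succ, mul_smul_comm, smul_mul_assoc, ← mul_assoc, ih, mul_assoc,
      mul_kBracket hK hK' hKX, mul_assoc, sub_right_comm]

lemma dpow_natCast (X : A) (n : ℕ) : dpow X n = (qfact n)⁻¹ • X ^ n := by simp [dpow]

lemma dpow_of_neg (X : A) {m : ℤ} (hm : m < 0) : dpow X m = 0 := if_pos hm

@[simp] lemma dpow_zero (X : A) : dpow X 0 = 1 := by simp [dpow, qfact]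

lemma mul_dpow (X : A) (m : ℤ) : X * dpow X m = qint (m + 1) • dpow X (m + 1) := by
  rcases lt_or_ge m 0 with hm | hm
  · rcases (Int.add_one_le_iff.2 hm).lt_or_eq with hm' | hm'
    · simp [dpow_of_neg X hm, dpow_of_neg X hm']
    · simp [dpow_of_neg X hm, hm']
  · lift m to ℕ using hm
    have hq : qint (m + 1) ≠ 0 := qint_ne_zero (by positivity)
    rw [dpow_natCast, ← Nat.cast_succ, dpow_natCast, qfact_succ, mul_smul_comm, smul_smul,
      mul_inv, Nat.cast_succ, mul_left_comm, mul_inv_cancel₀ hq, mul_one, pow_succ']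

variable (hK : K * Ki = 1) (hK' : Ki * K = 1)
  (hEF : E * F - F * E = (v - v⁻¹)⁻¹ • (K - Ki))
  (hKE : K * E = v ^ (2 : ℤ) • (E * K)) (hKF : K * F = v ^ (-2 : ℤ) • (F * K))

include hK hK' hEF hKF in
lemma mul_pow_succ_eq_add_kBracket (n : ℕ) :
    E * F ^ (n + 1) = F ^ (n + 1) * E + qint (n + 1) • (F ^ n * kBracket K Ki (-n)) := by
  have hEF' : E * F = F * E + kBracket K Ki 0 := by
    rw [← sub_eq_iff_eq_add', hEF, kBracket]; simp
  induction n with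
  | zero => simp [hEF', qint_one]
  | succ n ih =>
    have hKF' : kBracket K Ki (-n) * F = F * kBracket K Ki (-(n + 2)) := by
      rw [mul_kBracket hK hK' hKF, show -((n : ℤ) + 2) - -2 = -n by ring]
    have pascal := qint_smul_kBracket (K := K) (Ki := Ki) (n + 1 + 1) 1 (-(n + 1))
    rw [qint_one, one_smul, show (n : ℤ) + 1 + 1 - 1 = n + 1 by ring,
      show -((n : ℤ) + 1) - 1 = -(n + 2) by ring,
      show -((n : ℤ) + 1) + (n + 1 + 1) - 1 = 0 by ring] at pascal
    calc E * F ^ (n + 1 + 1) = (E * F ^ (n + 1)) * F := by rw [pow_succ, mul_assoc]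
      _ = F ^ (n + 1) * (E * F) + qint (n + 1) • (F ^ n * (kBracket K Ki (-n) * F)) := by
        rw [ih, add_mul, smul_mul_assoc, mul_assoc, mul_assoc]
      _ = F ^ (n + 1 + 1) * E
            + F ^ (n + 1) * (qint (n + 1) • kBracket K Ki (-(n + 2)) + kBracket K Ki 0) := by
        rw [hEF', hKF', mul_add, mul_add, mul_smul_comm, ← mul_assoc, ← mul_assoc, ← pow_succ,
          ← pow_succ]
        abel
      _ = _ := by rw [← pascal, mul_smul_comm]; push_cast; ring_nf

include hK hK' hEF hKF in
lemma mul_dpow_eq_add_kBracket (m : ℤ) :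
    E * dpow F m = dpow F m * E + dpow F (m - 1) * kBracket K Ki (1 - m) := by
  rcases lt_or_ge m 0 with hm | hm
  · simp [dpow_of_neg F hm, dpow_of_neg F (show m - 1 < 0 by omega)]
  lift m to ℕ using hm
  cases m with
  | zero => simp [dpow_of_neg F (show (-1 : ℤ) < 0 by norm_num)]
  | succ n =>
    have hq : qint (n + 1) ≠ 0 := qint_ne_zero (by positivity)
    rw [Nat.cast_succ, add_sub_cancel_right, show (1 : ℤ) - (n + 1) = -n by ring, dpow_natCast,
      ← Nat.cast_succ, dpow_natCast, mul_smul_comm, mul_pow_succ_eq_add_kBracket hK hK' hEF hKF,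
      qfact_succ, smul_add, smul_mul_assoc, smul_smul, mul_inv, inv_mul_cancel_right₀ hq,
      smul_mul_assoc]

include hK hK' hEF hKE hKF in
lemma mul_dpow_mul_kBinom_mul_dpow (β α c : ℤ) (t : ℕ) :
    E * (dpow F β * kBinom K Ki c t * dpow E α) =
      qint (α + 1) • (dpow F β * kBinom K Ki (c - 2) t * dpow E (α + 1)) +
        dpow F (β - 1) * kBracket K Ki (1 - β) * kBinom K Ki c t * dpow E α := by
  rw [← mul_assoc, ← mul_assoc, mul_dpow_eq_add_kBracket hK hK' hEF hKF, add_mul, add_mul,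
    mul_assoc (dpow F β) E, mul_kBinom hK hK' hKE, mul_assoc, mul_assoc, mul_dpow, mul_smul_comm,
    mul_smul_comm, ← mul_assoc]

include hK hK' hEF hKE hKF in
theorem dpow_mul_dpow (a : ℕ) (b : ℤ) :
    dpow E a * dpow F b = ∑ t ∈ range (a + 1),
      dpow F (b - t) * kBinom K Ki (2 * t - a - b) t * dpow E (a - t) := by
  induction a with
  | zero => simp [kBinom_zero]
  | succ a ih =>
    have hq : qint (a + 1) ≠ 0 := qint_ne_zero (by positivity)
    apply smul_right_injective A hq
    dsimp only
    rw [← smul_mul_assoc, Nat.cast_succ, ← mul_dpow, mul_assoc, ih, mul_sum, smul_sum,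
      sum_congr rfl fun t _ => mul_dpow_mul_kBinom_mul_dpow hK hK' hEF hKE hKF _ _ _ t]
    refine (sum_range_eq_of_pascal a (by simp [kBinom_zero]) (fun t => ?_) ?_).symm
    · have key := qint_smul_kBinom (hK.trans hK'.symm) (a + 1) (2 * t - a - b) t
      rw [show (a : ℤ) + 1 - (t + 1) = a - t by ring,
        show (a : ℤ) + 1 + (2 * t - a - b) - t = 1 - (b - t) by ring] at key
      push_cast
      rw [show 2 * ((t : ℤ) + 1) - (a + 1) - b = 2 * t - a - b + 1 by ring,
        show 2 * ((t : ℤ) + 1) - a - b - 2 = 2 * t - a - b by ring,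
        show b - ((t : ℤ) + 1) = b - t - 1 by ring, show (a : ℤ) + 1 - (t + 1) = a - t by ring,
        show (a : ℤ) - (t + 1) + 1 = a - t by ring, ← smul_mul_assoc, ← mul_smul_comm, key,
        mul_add, add_mul, mul_smul_comm, smul_mul_assoc, ← mul_assoc]
    · rw [show (a : ℤ) - ((a + 1 : ℕ) : ℤ) + 1 = 0 by push_cast; ring, qint_zero, zero_smul]

end Sl2

theorem divided_power_commutation_general
    (A : Type*) [Ring A] [Algebra (RatFunc ℚ) A] (E F K Ki : A)
    (hK : K * Ki = 1) (hK' : Ki * K = 1)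
    (hEF : E * F - F * E = (v - v⁻¹)⁻¹ • (K - Ki))
    (hKE : K * E = (v ^ (2 : ℤ)) • (E * K))
    (hKF : K * F = (v ^ (-2 : ℤ)) • (F * K))
    (a b : ℕ) :
    ((qfact a)⁻¹ • E ^ a) * ((qfact b)⁻¹ • F ^ b) =
      ∑ t ∈ Finset.range (min a b + 1),
        ((qfact (b - t))⁻¹ • F ^ (b - t)) *
          ((List.range t).map (fun s =>
            (v ^ ((s : ℤ) + 1) - v ^ (-(s : ℤ) - 1))⁻¹ •
              ((v ^ ((2 * (t : ℤ) - (a : ℤ) - (b : ℤ)) - (s : ℤ))) • K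
                - (v ^ (-((2 * (t : ℤ) - (a : ℤ) - (b : ℤ)) - (s : ℤ)))) • Ki))).prod *
          ((qfact (a - t))⁻¹ • E ^ (a - t)) := by
  rw [← dpow_natCast, ← dpow_natCast, dpow_mul_dpow hK hK' hEF hKE hKF,
    ← sum_subset (range_subset_range.2 (by omega : min a b + 1 ≤ a + 1))]
  · refine sum_congr rfl fun t ht => ?_
    have ht : t ≤ min a b := Nat.lt_succ_iff.1 (mem_range.1 ht)
    rw [← Nat.cast_sub (ht.trans (min_le_right a b)),
      ← Nat.cast_sub (ht.trans (min_le_left a b)), dpow_natCast, dpow_natCast]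
    -- the statement's `List.range t` is coerced to a list of integers
    simp only [kBinom, List.bind_eq_flatMap, List.pure_def, ← List.map_eq_flatMap, List.map_map]
    rfl
  · intro t _ ht
    rw [dpow_of_neg F (by simp at *; omega), zero_mul, zero_mul]

/-- The standard quantum `sl₂` commutation formula for divided powers:
`E^{(a)}F^{(b)} = Σ_{t=0}^{min(a,b)} F^{(b-t)} [K; 2t-a-b choose t] E^{(a-t)}`. -/
theorem divided_power_commutation
    (A : Type*) [Ring A] [Algebra (RatFunc ℚ) A] (E F K Ki : A)
    (hK : K * Ki = 1) (hK' : Ki * K = 1)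
    (hEF : E * F - F * E = (v - v⁻¹)⁻¹ • (K - Ki))
    (hKE : K * E = (v ^ (2 : ℤ)) • (E * K))
    (hKF : K * F = (v ^ (-2 : ℤ)) • (F * K))
    (a b : ℕ) (ha : 1 ≤ a) (hb : 1 ≤ b) :
    ((qfact a)⁻¹ • E ^ a) * ((qfact b)⁻¹ • F ^ b) =
      ∑ t ∈ Finset.range (min a b + 1),
        ((qfact (b - t))⁻¹ • F ^ (b - t)) *
          ((List.range t).map (fun s =>
            (v ^ ((s : ℤ) + 1) - v ^ (-(s : ℤ) - 1))⁻¹ •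
              ((v ^ ((2 * (t : ℤ) - (a : ℤ) - (b : ℤ)) - (s : ℤ))) • K
                - (v ^ (-((2 * (t : ℤ) - (a : ℤ) - (b : ℤ)) - (s : ℤ)))) • Ki))).prod *
          ((qfact (a - t))⁻¹ • E ^ (a - t)) :=
  divided_power_commutation_general A E F K Ki hK hK' hEF hKE hKF a b
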